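/- arXiv:2102.02089 — 2 statements merged into one kernel-verified Lean document; each statement's English description precedes it below -/
import Mathlib

section
/- Let R be a commutative ring, let p, q ∈ R, and let a : ℕ → R be a sequence whose generating function satisfies (p·z² − q·z + 1) · Σ_{n≥0} a_n zⁿ = 1 in the formal power series ring R[[z]]. Then for every n ≥ 0, a_n = Σ_{j=0}^{⌊n/2⌋} (−1)^j · C(n−j, j) · q^{n−2j} · p^{j}, where C(m, k) denotes the binomial coefficient. -/
/-!
Comparing coefficients, `(p z² - q z + 1) · Σ bₙ zⁿ = 1` says exactly that `b₀ = 1`, `b₁ = q` and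
`bₙ₊₂ = q bₙ₊₁ - p bₙ`. Pascal's rule `C(n+1-j, j+1) = C(n-j, j) + C(n-j, j+1)` shows that the
binomial sum obeys this recurrence, so its generating function is an inverse of `p z² - q z + 1`
as well, and inverses are unique.
-/

open PowerSeries

section

variable {R : Type*} [CommRing R]

theorem quadratic_mul_mk_eq_one {p q : R} {b : ℕ → R} (h0 : b 0 = 1) (h1 : b 1 = q)
    (hrec : ∀ n, b (n + 2) = q * b (n + 1) - p * b n) :
    (C p * X ^ 2 - C q * X + 1) * mk b = 1 := by
  ext (_ | _ | n)
  · simp [sub_mul, add_mul, mul_assoc, h0]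
  · simp [sub_mul, add_mul, mul_assoc, coeff_X_pow_mul', h0, h1]
  · simp [sub_mul, add_mul, mul_assoc, coeff_X_pow_mul', hrec]

def binomTerm (p q : R) (n j : ℕ) : R :=
  (-1) ^ j * (n - j).choose j * q ^ (n - 2 * j) * p ^ j

theorem binomTerm_zero_right (p q : R) (n : ℕ) : binomTerm p q n 0 = q ^ n := by
  simp [binomTerm]

theorem binomTerm_eq_zero_of_lt {p q : R} {n j : ℕ} (h : n < 2 * j) : binomTerm p q n j = 0 := by
  simp [binomTerm, Nat.choose_eq_zero_of_lt (show n - j < j by omega)]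

theorem binomTerm_succ_succ (p q : R) (n j : ℕ) :
    binomTerm p q (n + 2) (j + 1) = q * binomTerm p q (n + 1) (j + 1) - p * binomTerm p q n j := by
  rcases lt_or_ge n (2 * j) with h | h
  · rw [binomTerm_eq_zero_of_lt (by omega), binomTerm_eq_zero_of_lt (by omega),
      binomTerm_eq_zero_of_lt h]
    ring
  rcases h.eq_or_lt with h | h
  · subst h
    rw [binomTerm_eq_zero_of_lt (n := 2 * j + 1) (j := j + 1) (by omega)]
    simp [binomTerm, show 2 * j + 2 - (j + 1) = j + 1 by omega, show 2 * j - j = j by omega,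
      show 2 * j + 2 - 2 * (j + 1) = 0 by omega, pow_succ]
    ring
  · simp only [binomTerm]
    rw [show n + 2 - (j + 1) = n - j + 1 by omega, Nat.choose_succ_succ',
      show n + 1 - (j + 1) = n - j by omega, show n + 2 - 2 * (j + 1) = n - 2 * j by omega,
      show n - 2 * j = n + 1 - 2 * (j + 1) + 1 by omega]
    push_cast
    ring

def binomSum (p q : R) (n : ℕ) : R :=
  ∑ j ∈ Finset.range (n / 2 + 1), binomTerm p q n j

theorem binomSum_eq_sum_range {p q : R} {n N : ℕ} (hN : n / 2 < N) :
    binomSum p q n = ∑ j ∈ Finset.range N, binomTerm p q n j := by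
  refine Finset.sum_subset (Finset.range_subset_range.2 hN) fun j _ hj => ?_
  exact binomTerm_eq_zero_of_lt (by simp at hj; omega)

theorem binomSum_succ_succ (p q : R) (n : ℕ) :
    binomSum p q (n + 2) = q * binomSum p q (n + 1) - p * binomSum p q n := by
  rw [binomSum_eq_sum_range (N := n + 2) (by omega), binomSum_eq_sum_range (N := n + 2) (by omega),
    binomSum_eq_sum_range (N := n + 1) (by omega), Finset.sum_range_succ',
    Finset.sum_range_succ' (binomTerm p q (n + 1))]
  simp only [binomTerm_succ_succ, binomTerm_zero_right, Finset.sum_sub_distrib, mul_add,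
    Finset.mul_sum]
  ring

theorem quadratic_mul_mk_binomSum_eq_one (p q : R) :
    (C p * X ^ 2 - C q * X + 1) * mk (binomSum p q) = 1 :=
  quadratic_mul_mk_eq_one (by simp [binomSum, binomTerm]) (by simp [binomSum, binomTerm])
    (binomSum_succ_succ p q)

end

/-- If the sequence `a : ℕ → R` in a commutative ring has generating
function satisfying `(p·z² − q·z + 1) · Σ aₙ zⁿ = 1` in `R⟦z⟧`, then
`aₙ = Σ_{j=0}^{⌊n/2⌋} (−1)^j C(n−j, j) q^(n−2j) p^j` for all `n`. -/
theorem genfun_binomial_formula {R : Type*} [CommRing R] (p q : R) (a : ℕ → R)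
    (h : (PowerSeries.C p * PowerSeries.X ^ 2 - PowerSeries.C q * PowerSeries.X + 1) *
        PowerSeries.mk a = 1)
    (n : ℕ) :
    a n = ∑ j ∈ Finset.range (n / 2 + 1),
      (-1 : R) ^ j * (Nat.choose (n - j) j : R) * q ^ (n - 2 * j) * p ^ j := by
  have hmk : mk a = mk (binomSum p q) :=
    left_inv_eq_right_inv (by rwa [mul_comm]) (quadratic_mul_mk_binomSum_eq_one p q)
  simpa [binomSum, binomTerm] using congrArg (coeff n) hmk
end

section
/- For every integer n ≥ 1, the following identity holds in ℤ[x, y]: T(F_n) = y(1 − x) · Σ_{j=0}^{⌊(n−2)/2⌋} C(n−j−2, j)·(x + y + 1)^{n−2j−2}·(−xy)^{j} + x · Σ_{j=0}^{⌊(n−1)/2⌋} C(n−j−1, j)·(x + y + 1)^{n−2j−1}·(−xy)^{j}, where C(m, k) denotes the binomial coefficient (and the first sum is empty when n = 1). -/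
open scoped BigOperators

/-- A finite multigraph: a finite vertex type, a finite edge-index type, and a map
assigning to each edge its unordered pair of endpoints. -/
structure Multigraph where
  V : Type
  E : Type
  [fintypeV : Fintype V]
  [fintypeE : Fintype E]
  ends : E → Sym2 V

namespace Multigraph

attribute [instance] Multigraph.fintypeV Multigraph.fintypeE

/-- The simple graph on `G.V` in which two vertices are joined exactly when they are
connected by an edge from `A`. -/
def spanning (G : Multigraph) (A : Finset G.E) : SimpleGraph G.V :=
  SimpleGraph.fromRel (fun a b => ∃ e ∈ A, G.ends e = s(a, b))

/-- `ω(A)`: the number of connected components of the graph on `V` in which two vertices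
are joined exactly when they are connected by a path of edges from `A`. -/
noncomputable def omega (G : Multigraph) (A : Finset G.E) : ℕ :=
  Nat.card (G.spanning A).ConnectedComponent

/-- `r(A) = |V| − ω(A)`. -/
noncomputable def rk (G : Multigraph) (A : Finset G.E) : ℕ :=
  Fintype.card G.V - G.omega A

/-- The Tutte polynomial `T(G; x, y) = Σ_{A ⊆ E} (x−1)^(r(E)−r(A)) (y−1)^(|A|−r(A))`,
evaluated at elements `x`, `y` of a commutative ring. -/
noncomputable def tutte (G : Multigraph) {R : Type*} [CommRing R] (x y : R) : R :=
  ∑ A : Finset G.E,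
    (x - 1) ^ (G.rk Finset.univ - G.rk A) * (y - 1) ^ (A.card - G.rk A)

/-- A multigraph is connected if its full spanning graph is connected. -/
def Connected (G : Multigraph) : Prop :=
  (G.spanning Finset.univ).Connected

/-- The setoid on `G.V` identifying all vertices of `S` with each other. -/
def contractSetoid (G : Multigraph) (S : Set G.V) : Setoid G.V where
  r a b := a = b ∨ (a ∈ S ∧ b ∈ S)
  iseqv := by
    refine ⟨fun _ => Or.inl rfl, ?_, ?_⟩
    · rintro a b (rfl | h)
      · exact Or.inl rfl
      · exact Or.inr ⟨h.2, h.1⟩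
    · rintro a b c (rfl | h1) (rfl | h2) <;> tauto

/-- `G/S`: the multigraph obtained from `G` by identifying all the vertices of `S` into
one vertex, keeping all edges. -/
noncomputable def contract (G : Multigraph) (S : Set G.V) : Multigraph where
  V := Quotient (G.contractSetoid S)
  E := G.E
  fintypeV := @Quotient.fintype G.V G.fintypeV (G.contractSetoid S) (Classical.decRel _)
  fintypeE := G.fintypeE
  ends e := (G.ends e).map (Quotient.mk (G.contractSetoid S))

/-- The projection map from `G` to `G/S` on vertices. -/
def contractProj (G : Multigraph) (S : Set G.V) : G.V → (G.contract S).V :=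
  Quotient.mk (G.contractSetoid S)

/-- The disjoint union of two multigraphs. -/
def disjSum (G H : Multigraph) : Multigraph where
  V := G.V ⊕ H.V
  E := G.E ⊕ H.E
  ends := Sum.elim (fun e => (G.ends e).map Sum.inl) (fun e => (H.ends e).map Sum.inr)

/-- Add one extra edge joining `a` and `b`. -/
def addEdge (G : Multigraph) (a b : G.V) : Multigraph where
  V := G.V
  E := G.E ⊕ Unit
  ends := Sum.elim G.ends (fun _ => s(a, b))

end Multigraph

/-- The field `ℚ(x, y)` of rational functions in two variables over `ℚ`. -/
abbrev QXY : Type := FractionRing (MvPolynomial (Fin 2) ℚ)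

/-- The rational function `x` in `ℚ(x, y)`. -/
noncomputable def Xq : QXY := algebraMap (MvPolynomial (Fin 2) ℚ) QXY (MvPolynomial.X 0)

/-- The rational function `y` in `ℚ(x, y)`. -/
noncomputable def Yq : QXY := algebraMap (MvPolynomial (Fin 2) ℚ) QXY (MvPolynomial.X 1)

/-- The Tutte polynomial of a multigraph regarded as an element of `ℚ(x, y)`. -/
noncomputable def TT (G : Multigraph) : QXY := G.tutte Xq Yq

/-- A finite simple graph regarded as a multigraph: the edges are indexed by the edge
set of the graph. -/
noncomputable def SimpleGraph.toMultigraph {V : Type} [Fintype V] (G : SimpleGraph V) :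
    Multigraph where
  V := V
  E := G.edgeSet
  fintypeV := inferInstance
  fintypeE := Fintype.ofFinite G.edgeSet
  ends := Subtype.val

/-- The `n`-fan `F_n = K₁ ∨ P_n`: the apex `none` is adjacent to every vertex `some i`,
and `some i` is adjacent to `some (i+1)` for consecutive indices. -/
def fanGraph (n : ℕ) : SimpleGraph (Option (Fin n)) :=
  SimpleGraph.fromRel (fun a b =>
    a = none ∨ ∃ i j : Fin n, a = some i ∧ b = some j ∧ (i : ℕ) + 1 = (j : ℕ))

/-- The polynomial ring `ℤ[x, y]`. -/
abbrev Zxy : Type := MvPolynomial (Fin 2) ℤ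

/-- The polynomial `x` in `ℤ[x, y]`. -/
noncomputable def xZ : Zxy := MvPolynomial.X 0

/-- The polynomial `y` in `ℤ[x, y]`. -/
noncomputable def yZ : Zxy := MvPolynomial.X 1

/-!
Write an edge set of `F_n` as a set `S` of spokes `c p_i` and a set `P` of path edges
`p_i p_{i+1}`. The edges in `P` cut the path into blocks of consecutive vertices. The components of
`(V, S ∪ P)` are the one containing `c`, which contains every block met by a spoke, and one
component for each free block, i.e. a block met by no spoke. So if `f` is the number of free
blocks, then `r(E) - r(A) = f` and `|A| - r(A) = |S| + |P| + f - n`.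

Add the vertices of the path one at a time, recording whether the last block is joined to `c`. This
turns `(y - 1)ⁿ T(F_n)` into a linear recursion with two states, whose solution is
`(y - 1)ⁿ (x Uₙ + y (1 - x) Uₙ₋₁)` for the Lucas sequence
`Uₙ = (x + y + 1) Uₙ₋₁ - x y Uₙ₋₂`. Expanding `Uₙ` binomially gives the formula.
-/

open Finset

lemma Finset.sum_powerset_range_succ {M : Type*} [AddCommMonoid M] (k : ℕ) (f : Finset ℕ → M) :
    ∑ T ∈ (range (k + 1)).powerset, f T = ∑ T ∈ (range k).powerset, (f T + f (insert k T)) := by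
  rw [range_add_one, sum_powerset_insert notMem_range_self, sum_add_distrib]

lemma Finset.sum_powerset_range_add_two {M : Type*} [AddCommMonoid M] (m : ℕ)
    (F : Finset ℕ → Finset ℕ → M) :
    ∑ S ∈ (range (m + 2)).powerset, ∑ P ∈ (range (m + 1)).powerset, F S P =
      ∑ S ∈ (range (m + 1)).powerset, ∑ P ∈ (range m).powerset,
        (F S P + F S (insert m P) + F (insert (m + 1) S) P +
          F (insert (m + 1) S) (insert m P)) := by
  rw [sum_powerset_range_succ (m + 1)]
  simp only [sum_powerset_range_succ m, ← sum_add_distrib, add_assoc]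

lemma Fin.sum_finset_map_valEmbedding {M : Type*} [AddCommMonoid M] (n : ℕ) (f : Finset ℕ → M) :
    ∑ S : Finset (Fin n), f (S.map Fin.valEmbedding) = ∑ T ∈ (range n).powerset, f T := by
  have himage : univ.map (mapEmbedding (Fin.valEmbedding (n := n))).toEmbedding =
      (range n).powerset := by
    ext T
    simp only [mem_map, mem_univ, true_and, RelEmbedding.coe_toEmbedding, mapEmbedding_apply,
      mem_powerset]
    constructor
    · rintro ⟨S, rfl⟩ r hr
      obtain ⟨i, -, rfl⟩ := mem_map.mp hr
      exact mem_range.mpr i.2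
    · intro hT
      exact ⟨T.attachFin fun r hr => mem_range.mp (hT hr), map_valEmbedding_attachFin _⟩
  rw [← himage, sum_map]
  rfl

lemma SimpleGraph.card_connectedComponent_eq_card_image {V C : Type*} [Fintype V]
    [DecidableEq C] (G : SimpleGraph V) (f : V → C) (hadj : ∀ a b, G.Adj a b → f a = f b)
    (hreach : ∀ a b, f a = f b → G.Reachable a b) :
    Nat.card G.ConnectedComponent = #(univ.image f) := by
  have hwalk {a b : V} (p : G.Walk a b) : f a = f b := by
    induction p with
    | nil => rfl
    | cons h _ ih => exact (hadj _ _ h).trans ih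
  let φ : G.ConnectedComponent → univ.image f :=
    SimpleGraph.ConnectedComponent.lift (fun v => ⟨f v, mem_image_of_mem f (mem_univ v)⟩)
      fun _ _ p _ => Subtype.ext (hwalk p)
  have hφ : Function.Bijective φ := by
    refine ⟨fun c d => ?_, ?_⟩
    · refine SimpleGraph.ConnectedComponent.ind₂ (fun a b h => ?_) c d
      exact SimpleGraph.ConnectedComponent.sound (hreach a b (congrArg Subtype.val h))
    · rintro ⟨_, hc⟩
      obtain ⟨v, -, rfl⟩ := mem_image.mp hc
      exact ⟨G.connectedComponentMk v, rfl⟩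
  rw [Nat.card_eq_of_bijective φ hφ, Nat.card_eq_fintype_card, Fintype.card_coe]

section LucasU

variable {R : Type*} [CommRing R] (a b : R)

def lucasU : ℕ → R
  | 0 => 0
  | 1 => 1
  | n + 2 => a * lucasU (n + 1) - b * lucasU n

def lucasTerm (n j : ℕ) : R := (n - j).choose j * a ^ (n - 2 * j) * (-b) ^ j

lemma lucasTerm_add_two_succ {n j : ℕ} (hj : j ≤ n) :
    lucasTerm a b (n + 2) (j + 1) = a * lucasTerm a b (n + 1) (j + 1) - b * lucasTerm a b n j := by
  have pascal : (n + 1 - j).choose (j + 1) = (n - j).choose j + (n - j).choose (j + 1) := by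
    rw [show n + 1 - j = n - j + 1 by omega, Nat.choose_succ_succ]
  -- either `2j < n`, or the binomial coefficient vanishes
  have hpow : ((n - j).choose (j + 1) : R) * a ^ (n - 2 * j) =
      (n - j).choose (j + 1) * (a * a ^ (n - 2 * j - 1)) := by
    rcases Nat.lt_or_ge (2 * j) n with h | h
    · rw [← pow_succ', show n - 2 * j - 1 + 1 = n - 2 * j by omega]
    · simp [Nat.choose_eq_zero_of_lt (show n - j < j + 1 by omega)]
  simp only [lucasTerm, show n + 2 - (j + 1) = n + 1 - j by omega,
    show n + 1 - (j + 1) = n - j by omega, show n + 2 - 2 * (j + 1) = n - 2 * j by omega,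
    show n + 1 - 2 * (j + 1) = n - 2 * j - 1 by omega, pascal]
  push_cast
  linear_combination (-b) ^ (j + 1) * hpow

lemma lucasU_succ_eq_sum_lucasTerm (n : ℕ) :
    lucasU a b (n + 1) = ∑ j ∈ range (n + 1), lucasTerm a b n j := by
  induction n using Nat.twoStepInduction with
  | zero => simp [lucasU, lucasTerm]
  | one => simp [lucasU, lucasTerm, sum_range_succ]
  | more n ih₁ ih₂ =>
    have hsplit : ∑ j ∈ range (n + 2 + 1), lucasTerm a b (n + 2) j =
        lucasTerm a b (n + 2) 0 + ∑ j ∈ range (n + 1), lucasTerm a b (n + 2) (j + 1) := by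
      rw [sum_range_succ', sum_range_succ, add_comm]
      simp [lucasTerm]
    rw [show n + 2 + 1 = n + 1 + 2 by rfl, lucasU, ih₁, ih₂, hsplit, sum_range_succ' _ (n + 1),
      sum_congr rfl fun j hj => lucasTerm_add_two_succ a b (Nat.lt_succ_iff.mp (mem_range.mp hj))]
    have hzero : lucasTerm a b (n + 2) 0 = a * lucasTerm a b (n + 1) 0 := by
      simp [lucasTerm, pow_succ']
    rw [sum_sub_distrib, ← mul_sum, ← mul_sum, hzero]
    ring

lemma lucasU_eq_sum_choose (n : ℕ) :
    lucasU a b n = ∑ j ∈ range ((n + 1) / 2),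
      ((n - j - 1).choose j : R) * a ^ (n - 2 * j - 1) * (-b) ^ j := by
  rcases n with _ | n
  · simp [lucasU]
  rw [lucasU_succ_eq_sum_lucasTerm]
  symm
  apply sum_subset_zero_on_sdiff (range_subset_range.mpr (by omega))
  · intro j hj
    rw [mem_sdiff, mem_range, mem_range] at hj
    simp [lucasTerm, Nat.choose_eq_zero_of_lt (show n - j < j by omega)]
  · intro j _
    simp only [lucasTerm, show n + 1 - j - 1 = n - j by omega,
      show n + 1 - 2 * j - 1 = n - 2 * j by omega]

end LucasU

namespace Fan

/-- For path edges `{i, i + 1}`, `i ∈ P`, on the vertices `0, 1, 2, …`: the least vertex of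
the block of consecutive vertices containing `i`. -/
def blockRoot (P : Finset ℕ) : ℕ → ℕ
  | 0 => 0
  | i + 1 => if i ∈ P then blockRoot P i else i + 1

lemma blockRoot_succ (P : Finset ℕ) (i : ℕ) :
    blockRoot P (i + 1) = if i ∈ P then blockRoot P i else i + 1 := rfl

lemma blockRoot_le (P : Finset ℕ) : ∀ i, blockRoot P i ≤ i
  | 0 => le_rfl
  | i + 1 => by
    rw [blockRoot_succ]
    split_ifs
    · exact (blockRoot_le P i).trans i.le_succ
    · exact le_rfl

@[simp]
lemma blockRoot_blockRoot (P : Finset ℕ) : ∀ i, blockRoot P (blockRoot P i) = blockRoot P i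
  | 0 => rfl
  | i + 1 => by
    rw [blockRoot_succ]
    split_ifs with h
    · exact blockRoot_blockRoot P i
    · rw [blockRoot_succ, if_neg h]

lemma blockRoot_succ_eq_self_iff (P : Finset ℕ) (i : ℕ) :
    blockRoot P (i + 1) = i + 1 ↔ i ∉ P := by
  rw [blockRoot_succ]
  split_ifs with h
  · simpa [h] using (blockRoot_le P i).trans_lt i.lt_succ_self |>.ne
  · simp [h]

lemma blockRoot_insert_of_le (P : Finset ℕ) {k i : ℕ} (h : i ≤ k) :
    blockRoot (insert k P) i = blockRoot P i := by
  induction i with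
  | zero => rfl
  | succ i ih =>
    have hik : i ≠ k := by omega
    simp only [blockRoot_succ, ih (by omega), mem_insert, hik, false_or]

def blockRoots (n : ℕ) (P : Finset ℕ) : Finset ℕ := (range n).filter fun r => blockRoot P r = r

def spokedRoots (S P : Finset ℕ) : Finset ℕ := S.image (blockRoot P)

def freeRoots (n : ℕ) (S P : Finset ℕ) : Finset ℕ := blockRoots n P \ spokedRoots S P

def freeRootsExceptLast (n : ℕ) (S P : Finset ℕ) : Finset ℕ :=
  blockRoots n P \ insert (blockRoot P (n - 1)) (spokedRoots S P)

def LastSpoked (n : ℕ) (S P : Finset ℕ) : Prop := blockRoot P (n - 1) ∈ spokedRoots S P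

instance (n : ℕ) (S P : Finset ℕ) : Decidable (LastSpoked n S P) :=
  inferInstanceAs (Decidable (_ ∈ _))

lemma card_freeRoots {n : ℕ} (hn : 1 ≤ n) (S P : Finset ℕ) :
    #(freeRoots n S P) = #(freeRootsExceptLast n S P) + if LastSpoked n S P then 0 else 1 := by
  have hlast : blockRoot P (n - 1) ∈ freeRoots n S P ↔ ¬LastSpoked n S P := by
    have := blockRoot_le P (n - 1)
    simp only [freeRoots, blockRoots, LastSpoked, mem_sdiff, mem_filter, mem_range,
      blockRoot_blockRoot, and_true]
    exact and_iff_right (by omega)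
  rw [freeRootsExceptLast, sdiff_insert, ← freeRoots]
  split_ifs with h
  · rw [erase_eq_of_notMem (hlast.not_left.mpr h), add_zero]
  · rw [card_erase_add_one (hlast.mpr h)]

lemma card_blockRoots_add_card {n : ℕ} {P : Finset ℕ} (hP : P ⊆ range (n - 1)) :
    #(blockRoots n P) + #P = n := by
  have hsucc : P.image (· + 1) ⊆ range n := fun r hr => by
    obtain ⟨p, hp, rfl⟩ := mem_image.mp hr
    have := mem_range.mp (hP hp)
    exact mem_range.mpr (by omega)
  have hroots : blockRoots n P = range n \ P.image (· + 1) := by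
    ext (_ | r)
    · simp [blockRoots, blockRoot]
    · simp [blockRoots, blockRoot_succ_eq_self_iff]
  rw [hroots, ← card_image_of_injective P (add_left_injective 1),
    card_sdiff_add_card_eq_card hsucc, card_range]

lemma le_card_add_card_add_card_freeRoots {n : ℕ} (S : Finset ℕ) {P : Finset ℕ}
    (hP : P ⊆ range (n - 1)) : n ≤ #S + #P + #(freeRoots n S P) := by
  have h₁ := card_blockRoots_add_card hP
  have h₂ : #(spokedRoots S P) ≤ #S := card_image_le
  have h₃ := le_card_sdiff (spokedRoots S P) (blockRoots n P)
  rw [← freeRoots] at h₃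
  omega

lemma card_freeRoots_le (n : ℕ) (S P : Finset ℕ) : #(freeRoots n S P) ≤ n :=
  (card_le_card sdiff_subset).trans ((card_filter_le _ _).trans_eq (card_range n))

lemma freeRoots_range (n : ℕ) (P : Finset ℕ) : freeRoots n (range n) P = ∅ := by
  refine sdiff_eq_empty_iff_subset.mpr fun r hr => ?_
  obtain ⟨hrn, hroot⟩ := mem_filter.mp hr
  exact mem_image.mpr ⟨r, hrn, hroot⟩

section Extend

variable {m : ℕ} {S P : Finset ℕ}

lemma blockRoot_top (hP : P ⊆ range m) : blockRoot P (m + 1) = m + 1 :=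
  (blockRoot_succ_eq_self_iff P m).mpr fun h => by simpa using hP h

lemma blockRoot_insert_top : blockRoot (insert m P) (m + 1) = blockRoot P m := by
  rw [blockRoot_succ, if_pos (mem_insert_self m P), blockRoot_insert_of_le P le_rfl]

lemma blockRoots_succ_succ (hP : P ⊆ range m) :
    blockRoots (m + 2) P = insert (m + 1) (blockRoots (m + 1) P) := by
  rw [blockRoots, range_add_one, filter_insert, if_pos (blockRoot_top hP), ← blockRoots]

lemma blockRoots_insert_path : blockRoots (m + 2) (insert m P) = blockRoots (m + 1) P := by
  have hm : blockRoot (insert m P) (m + 1) ≠ m + 1 := by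
    have := blockRoot_le P m
    rw [blockRoot_insert_top]
    omega
  rw [blockRoots, range_add_one, filter_insert, if_neg hm, blockRoots]
  exact filter_congr fun r hr => by
    rw [blockRoot_insert_of_le P (Nat.lt_succ_iff.mp (mem_range.mp hr))]

lemma top_notMem_blockRoots : m + 1 ∉ blockRoots (m + 1) P := by simp [blockRoots]

lemma spokedRoots_insert_path (hS : S ⊆ range (m + 1)) :
    spokedRoots S (insert m P) = spokedRoots S P :=
  image_congr fun k hk => blockRoot_insert_of_le P (by simpa [Nat.lt_succ_iff] using hS hk)

lemma spokedRoots_insert_spoke (P' : Finset ℕ) :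
    spokedRoots (insert (m + 1) S) P' = insert (blockRoot P' (m + 1)) (spokedRoots S P') :=
  image_insert _ _ _

lemma le_of_mem_spokedRoots (hS : S ⊆ range (m + 1)) {P' : Finset ℕ} {r : ℕ}
    (hr : r ∈ spokedRoots S P') : r ≤ m := by
  obtain ⟨k, hk, rfl⟩ := mem_image.mp hr
  have := mem_range.mp (hS hk)
  have := blockRoot_le P' k
  omega

lemma not_lastSpoked (hS : S ⊆ range (m + 1)) (hP : P ⊆ range m) :
    ¬LastSpoked (m + 2) S P := fun h => by
  have := le_of_mem_spokedRoots hS h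
  rw [show m + 2 - 1 = m + 1 from rfl, blockRoot_top hP] at this
  omega

lemma lastSpoked_insert_spoke (P' : Finset ℕ) : LastSpoked (m + 2) (insert (m + 1) S) P' :=
  mem_image_of_mem _ (mem_insert_self _ _)

lemma lastSpoked_insert_path_iff (hS : S ⊆ range (m + 1)) :
    LastSpoked (m + 2) S (insert m P) ↔ LastSpoked (m + 1) S P := by
  simp only [LastSpoked, show m + 2 - 1 = m + 1 from rfl, Nat.add_sub_cancel, blockRoot_insert_top,
    spokedRoots_insert_path hS]

lemma freeRootsExceptLast_succ_succ (hP : P ⊆ range m) :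
    freeRootsExceptLast (m + 2) S P = freeRoots (m + 1) S P := by
  rw [freeRootsExceptLast, show m + 2 - 1 = m + 1 from rfl, blockRoot_top hP,
    blockRoots_succ_succ hP, insert_sdiff_insert, sdiff_insert_of_notMem top_notMem_blockRoots,
    freeRoots]

lemma freeRootsExceptLast_insert_spoke (hP : P ⊆ range m) :
    freeRootsExceptLast (m + 2) (insert (m + 1) S) P = freeRoots (m + 1) S P := by
  rw [freeRootsExceptLast, spokedRoots_insert_spoke, show m + 2 - 1 = m + 1 from rfl,
    blockRoot_top hP, insert_idem, blockRoots_succ_succ hP, insert_sdiff_insert,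
    sdiff_insert_of_notMem top_notMem_blockRoots, freeRoots]

lemma freeRootsExceptLast_insert_path (hS : S ⊆ range (m + 1)) :
    freeRootsExceptLast (m + 2) S (insert m P) = freeRootsExceptLast (m + 1) S P := by
  rw [freeRootsExceptLast, freeRootsExceptLast, show m + 2 - 1 = m + 1 from rfl,
    Nat.add_sub_cancel, blockRoot_insert_top, blockRoots_insert_path, spokedRoots_insert_path hS]

lemma freeRootsExceptLast_insert_spoke_path (hS : S ⊆ range (m + 1)) :
    freeRootsExceptLast (m + 2) (insert (m + 1) S) (insert m P) =
      freeRootsExceptLast (m + 1) S P := by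
  rw [← freeRootsExceptLast_insert_path hS, freeRootsExceptLast, freeRootsExceptLast,
    spokedRoots_insert_spoke, show m + 2 - 1 = m + 1 from rfl, insert_idem]

end Extend

end Fan

namespace Fan

section StateSum

variable {R : Type*} [CommRing R] (x y : R)

/-- The factor `(x - 1) * (y - 1)` of a free last block is left out: that block can still be joined
to the apex when the fan grows. -/
def stateWeight (n : ℕ) (S P : Finset ℕ) : R :=
  ((x - 1) * (y - 1)) ^ #(freeRootsExceptLast n S P) * (y - 1) ^ (#S + #P)

/-- `(y - 1) ^ n` times the Tutte polynomial of `F_n`, as a sum over spoke sets `S` and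
path-edge sets `P`. -/
def fanStateSum (n : ℕ) : R :=
  ∑ S ∈ (range n).powerset, ∑ P ∈ (range (n - 1)).powerset,
    (x - 1) ^ #(freeRoots n S P) * (y - 1) ^ (#S + #P + #(freeRoots n S P))

def spokedTerm (n : ℕ) (S P : Finset ℕ) : R :=
  if LastSpoked n S P then stateWeight x y n S P else 0

def unspokedTerm (n : ℕ) (S P : Finset ℕ) : R :=
  if LastSpoked n S P then 0 else stateWeight x y n S P

def spokedSum (n : ℕ) : R :=
  ∑ S ∈ (range n).powerset, ∑ P ∈ (range (n - 1)).powerset, spokedTerm x y n S P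

def unspokedSum (n : ℕ) : R :=
  ∑ S ∈ (range n).powerset, ∑ P ∈ (range (n - 1)).powerset, unspokedTerm x y n S P

section Extend

variable {m : ℕ} {S P : Finset ℕ}

lemma stateWeight_extend (hS : S ⊆ range (m + 1)) (hP : P ⊆ range m) :
    let w := stateWeight x y (m + 1) S P
    let c : R := if LastSpoked (m + 1) S P then 1 else (x - 1) * (y - 1)
    stateWeight x y (m + 2) S P = w * c ∧
      stateWeight x y (m + 2) (insert (m + 1) S) P = w * c * (y - 1) ∧
      stateWeight x y (m + 2) S (insert m P) = w * (y - 1) ∧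
      stateWeight x y (m + 2) (insert (m + 1) S) (insert m P) = w * (y - 1) ^ 2 := by
  have hSm : #(insert (m + 1) S) = #S + 1 := card_insert_of_notMem fun h => by simpa using hS h
  have hPm : #(insert m P) = #P + 1 := card_insert_of_notMem fun h => by simpa using hP h
  have hfree := card_freeRoots (Nat.le_add_left 1 m) S P
  refine ⟨?_, ?_, ?_, ?_⟩ <;> simp only [stateWeight]
  · rw [freeRootsExceptLast_succ_succ hP, hfree]
    split_ifs <;> ring
  · rw [freeRootsExceptLast_insert_spoke hP, hfree, hSm]
    split_ifs <;> ring
  · rw [freeRootsExceptLast_insert_path hS, hPm]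
    ring
  · rw [freeRootsExceptLast_insert_spoke_path hS, hSm, hPm]
    ring

lemma spokedTerm_extend (hS : S ⊆ range (m + 1)) (hP : P ⊆ range m) :
    spokedTerm x y (m + 2) S P + spokedTerm x y (m + 2) S (insert m P) +
        spokedTerm x y (m + 2) (insert (m + 1) S) P +
        spokedTerm x y (m + 2) (insert (m + 1) S) (insert m P) =
      (y ^ 2 - 1) * spokedTerm x y (m + 1) S P +
        x * (y - 1) ^ 2 * unspokedTerm x y (m + 1) S P := by
  obtain ⟨h₀, h₁, h₂, h₃⟩ := stateWeight_extend x y hS hP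
  simp only [spokedTerm, unspokedTerm]
  rw [h₀, h₁, h₂, h₃, if_neg (not_lastSpoked hS hP), if_pos (lastSpoked_insert_spoke _),
    if_pos (lastSpoked_insert_spoke _), if_congr (lastSpoked_insert_path_iff hS) rfl rfl]
  split_ifs <;> ring

lemma unspokedTerm_extend (hS : S ⊆ range (m + 1)) (hP : P ⊆ range m) :
    unspokedTerm x y (m + 2) S P + unspokedTerm x y (m + 2) S (insert m P) +
        unspokedTerm x y (m + 2) (insert (m + 1) S) P +
        unspokedTerm x y (m + 2) (insert (m + 1) S) (insert m P) =
      spokedTerm x y (m + 1) S P + x * (y - 1) * unspokedTerm x y (m + 1) S P := by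
  obtain ⟨h₀, h₁, h₂, h₃⟩ := stateWeight_extend x y hS hP
  simp only [spokedTerm, unspokedTerm]
  rw [h₀, h₁, h₂, h₃, if_neg (not_lastSpoked hS hP), if_pos (lastSpoked_insert_spoke _),
    if_pos (lastSpoked_insert_spoke _), if_congr (lastSpoked_insert_path_iff hS) rfl rfl]
  split_ifs <;> ring

end Extend

lemma spokedSum_add_two (m : ℕ) :
    spokedSum x y (m + 2) =
      (y ^ 2 - 1) * spokedSum x y (m + 1) + x * (y - 1) ^ 2 * unspokedSum x y (m + 1) := by
  simp only [spokedSum, unspokedSum, show m + 2 - 1 = m + 1 from rfl, Nat.add_sub_cancel,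
    sum_powerset_range_add_two, mul_sum, ← sum_add_distrib]
  exact sum_congr rfl fun S hS => sum_congr rfl fun P hP =>
    spokedTerm_extend x y (mem_powerset.mp hS) (mem_powerset.mp hP)

lemma unspokedSum_add_two (m : ℕ) :
    unspokedSum x y (m + 2) = spokedSum x y (m + 1) + x * (y - 1) * unspokedSum x y (m + 1) := by
  simp only [spokedSum, unspokedSum, show m + 2 - 1 = m + 1 from rfl, Nat.add_sub_cancel,
    sum_powerset_range_add_two, mul_sum, ← sum_add_distrib]
  exact sum_congr rfl fun S hS => sum_congr rfl fun P hP =>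
    unspokedTerm_extend x y (mem_powerset.mp hS) (mem_powerset.mp hP)

lemma spokedSum_one : spokedSum x y 1 = y - 1 := by
  have : ¬LastSpoked 1 ∅ ∅ ∧ LastSpoked 1 {0} ∅ ∧ freeRootsExceptLast 1 {0} ∅ = ∅ := by decide
  rw [spokedSum, show range 1 = range (0 + 1) from rfl, sum_powerset_range_succ]
  simp [spokedTerm, stateWeight, this]

lemma unspokedSum_one : unspokedSum x y 1 = 1 := by
  have : ¬LastSpoked 1 ∅ ∅ ∧ LastSpoked 1 {0} ∅ ∧ freeRootsExceptLast 1 ∅ ∅ = ∅ := by decide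
  rw [unspokedSum, show range 1 = range (0 + 1) from rfl, sum_powerset_range_succ]
  simp [unspokedTerm, stateWeight, this]

lemma spokedSum_unspokedSum_eq_lucasU (m : ℕ) :
    spokedSum x y (m + 1) = (y - 1) ^ (m + 1) * lucasU (x + y + 1) (x * y) (m + 1) ∧
      unspokedSum x y (m + 1) = (y - 1) ^ m *
        (lucasU (x + y + 1) (x * y) (m + 1) - y * lucasU (x + y + 1) (x * y) m) := by
  induction m with
  | zero => simp [spokedSum_one, unspokedSum_one, lucasU]
  | succ m ih =>
    rw [spokedSum_add_two, unspokedSum_add_two, ih.1, ih.2, lucasU]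
    constructor <;> ring

lemma fanStateSum_eq {n : ℕ} (hn : 1 ≤ n) :
    fanStateSum x y n = spokedSum x y n + (x - 1) * (y - 1) * unspokedSum x y n := by
  simp only [fanStateSum, spokedSum, unspokedSum, mul_sum, ← sum_add_distrib]
  refine sum_congr rfl fun S _ => sum_congr rfl fun P _ => ?_
  rw [card_freeRoots hn, spokedTerm, unspokedTerm, stateWeight, mul_pow]
  split_ifs <;> ring

lemma fanStateSum_eq_lucasU (m : ℕ) :
    fanStateSum x y (m + 1) = (y - 1) ^ (m + 1) *
      (x * lucasU (x + y + 1) (x * y) (m + 1) + y * (1 - x) * lucasU (x + y + 1) (x * y) m) := by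
  obtain ⟨hs, hu⟩ := spokedSum_unspokedSum_eq_lucasU x y m
  rw [fanStateSum_eq x y (Nat.le_add_left 1 m), hs, hu]
  ring

end StateSum

end Fan

namespace Fan

variable {m : ℕ}

def fanEdge : Fin (m + 1) ⊕ Fin m → Sym2 (Option (Fin (m + 1)))
  | .inl i => s(none, some i)
  | .inr i => s(some i.castSucc, some i.succ)

lemma fanEdge_injective : Function.Injective (fanEdge (m := m)) := by
  rintro (i | i) (j | j) h <;> simp [fanEdge, Fin.ext_iff] at h ⊢
  all_goals omega

lemma exists_fanEdge_eq_iff {a b : Option (Fin (m + 1))} :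
    (∃ z, fanEdge z = s(a, b)) ↔ (fanGraph (m + 1)).Adj a b := by
  have hdir {a b : Option (Fin (m + 1))} (hab : a ≠ b)
      (h : a = none ∨ ∃ i j : Fin (m + 1), a = some i ∧ b = some j ∧ (i : ℕ) + 1 = j) :
      ∃ z, fanEdge z = s(a, b) := by
    obtain rfl | ⟨i, j, rfl, rfl, hij⟩ := h
    · obtain _ | j := b
      · exact absurd rfl hab
      · exact ⟨.inl j, rfl⟩
    · refine ⟨.inr ⟨i, by omega⟩, ?_⟩
      simp [fanEdge, hij]
  simp only [fanGraph, SimpleGraph.fromRel_adj]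
  constructor
  · rintro ⟨i | i, h⟩ <;> simp only [fanEdge, Sym2.eq_iff] at h <;>
      obtain ⟨rfl, rfl⟩ | ⟨rfl, rfl⟩ := h
    · simp
    · simp
    · exact ⟨by simp [Fin.ext_iff], .inl (.inr ⟨_, _, rfl, rfl, rfl⟩)⟩
    · exact ⟨by simp [Fin.ext_iff], .inr (.inr ⟨_, _, rfl, rfl, rfl⟩)⟩
  · rintro ⟨hab, h | h⟩
    · exact hdir hab h
    · obtain ⟨z, hz⟩ := hdir hab.symm h
      exact ⟨z, hz.trans Sym2.eq_swap⟩

lemma range_fanEdge : Set.range (fanEdge (m := m)) = (fanGraph (m + 1)).edgeSet := by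
  ext e
  induction e using Sym2.ind with
  | _ a b => exact exists_fanEdge_eq_iff

noncomputable def fanEdgeEquiv : Fin (m + 1) ⊕ Fin m ≃ (fanGraph (m + 1)).toMultigraph.E :=
  (Equiv.ofInjective _ fanEdge_injective).trans (Equiv.setCongr range_fanEdge)

noncomputable def fanEdgeSets :
    Finset (Fin (m + 1)) × Finset (Fin m) ≃ Finset (fanGraph (m + 1)).toMultigraph.E :=
  Finset.sumEquiv.toEquiv.symm.trans fanEdgeEquiv.finsetCongr

lemma card_fanEdgeSets (S : Finset (Fin (m + 1))) (P : Finset (Fin m)) :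
    #(fanEdgeSets (S, P)) = #S + #P := by
  simp [fanEdgeSets, Equiv.finsetCongr_apply, card_disjSum]

def blockLabel (S P : Finset ℕ) : Option (Fin (m + 1)) → Option ℕ
  | none => none
  | some i => if blockRoot P i ∈ spokedRoots S P then none else some (blockRoot P i)

lemma blockRoot_of_blockLabel_eq_some {S P : Finset ℕ} {i : Fin (m + 1)} {r : ℕ}
    (h : blockLabel S P (some i) = some r) : blockRoot P i = r := by
  simp only [blockLabel] at h
  split_ifs at h
  exact Option.some_injective _ h

lemma image_blockLabel (S P : Finset ℕ) :
    univ.image (blockLabel (m := m) S P) = insert none ((freeRoots (m + 1) S P).image some) := by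
  ext (_ | r)
  · simp only [mem_image, mem_univ, true_and, mem_insert, true_or, iff_true]
    exact ⟨none, rfl⟩
  simp only [mem_image, mem_univ, true_and, mem_insert, reduceCtorEq, false_or, Option.some_inj,
    freeRoots, blockRoots, mem_sdiff, mem_filter, mem_range]
  constructor
  · rintro ⟨_ | i, h⟩
    · exact absurd h (by simp [blockLabel])
    · have hr := blockRoot_of_blockLabel_eq_some h
      subst hr
      refine ⟨_, ⟨⟨(blockRoot_le _ _).trans_lt i.2, blockRoot_blockRoot _ _⟩, ?_⟩, rfl⟩
      intro hs
      simp [blockLabel, hs] at h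
  · rintro ⟨r, ⟨⟨hr, hroot⟩, hfree⟩, rfl⟩
    refine ⟨some ⟨r, hr⟩, ?_⟩
    simp [blockLabel, hroot, hfree]

section Components

variable (S : Finset (Fin (m + 1))) (P : Finset (Fin m))

noncomputable abbrev fanSpanning : SimpleGraph (Option (Fin (m + 1))) :=
  (fanGraph (m + 1)).toMultigraph.spanning (fanEdgeSets (S, P))

lemma fanSpanning_adj {a b : Option (Fin (m + 1))} :
    (fanSpanning S P).Adj a b ↔ a ≠ b ∧ ∃ z ∈ S.disjSum P, fanEdge z = s(a, b) := by
  have hmem {e : Sym2 (Option (Fin (m + 1)))} :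
      (∃ f ∈ fanEdgeSets (S, P), (fanGraph (m + 1)).toMultigraph.ends f = e) ↔
        ∃ z ∈ S.disjSum P, fanEdge z = e := by
    rw [show fanEdgeSets (S, P) = (S.disjSum P).map fanEdgeEquiv.toEmbedding from rfl]
    simp only [mem_map, Equiv.coe_toEmbedding, exists_exists_and_eq_and]
    rfl
  refine (SimpleGraph.fromRel_adj (V := Option (Fin (m + 1))) _ a b).trans
    (and_congr_right fun _ => ⟨fun h => hmem.mp ?_, fun h => .inl (hmem.mpr h)⟩)
  obtain h | ⟨f, hf, hfe⟩ := h
  exacts [h, ⟨f, hf, hfe.trans Sym2.eq_swap⟩]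

lemma blockLabel_eq_of_adj {a b : Option (Fin (m + 1))} (h : (fanSpanning S P).Adj a b) :
    blockLabel (S.map Fin.valEmbedding) (P.map Fin.valEmbedding) a =
      blockLabel (S.map Fin.valEmbedding) (P.map Fin.valEmbedding) b := by
  obtain ⟨-, i | i, hi, he⟩ := (fanSpanning_adj S P).mp h <;>
    simp only [inl_mem_disjSum, inr_mem_disjSum, fanEdge, Sym2.eq_iff] at hi he
  · have hspoked : blockRoot (P.map Fin.valEmbedding) i ∈
        spokedRoots (S.map Fin.valEmbedding) (P.map Fin.valEmbedding) :=
      mem_image_of_mem _ (mem_map_of_mem _ hi)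
    obtain ⟨rfl, rfl⟩ | ⟨rfl, rfl⟩ := he <;> simp [blockLabel, hspoked]
  · have hroot : blockRoot (P.map Fin.valEmbedding) (i + 1) =
        blockRoot (P.map Fin.valEmbedding) i := by
      have hiP : (i : ℕ) ∈ P.map Fin.valEmbedding := mem_map_of_mem Fin.valEmbedding hi
      rw [blockRoot_succ, if_pos hiP]
    obtain ⟨rfl, rfl⟩ | ⟨rfl, rfl⟩ := he <;> simp [blockLabel, hroot]

lemma reachable_blockRoot (i : Fin (m + 1)) :
    (fanSpanning S P).Reachable (some i)
      (some ⟨blockRoot (P.map Fin.valEmbedding) i, (blockRoot_le _ _).trans_lt i.2⟩) := by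
  induction i using Fin.induction with
  | zero => rfl
  | succ i ih =>
    by_cases hi : i ∈ P
    · have hiP : (i : ℕ) ∈ P.map Fin.valEmbedding := mem_map_of_mem Fin.valEmbedding hi
      have hadj : (fanSpanning S P).Adj (some i.castSucc) (some i.succ) :=
        (fanSpanning_adj S P).mpr ⟨by simp [Fin.ext_iff], .inr i, inr_mem_disjSum.mpr hi, rfl⟩
      refine hadj.symm.reachable.trans ?_
      convert ih using 3
      simp only [Fin.val_succ, blockRoot_succ, if_pos hiP, Fin.val_castSucc]
    · have hiP : (i : ℕ) ∉ P.map Fin.valEmbedding := (mem_map' Fin.valEmbedding).not.mpr hi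
      convert SimpleGraph.Reachable.refl (G := fanSpanning S P) _ using 3
      simp only [Fin.val_succ, blockRoot_succ, if_neg hiP]

lemma reachable_of_blockRoot_eq {i j : Fin (m + 1)}
    (h : blockRoot (P.map Fin.valEmbedding) i = blockRoot (P.map Fin.valEmbedding) j) :
    (fanSpanning S P).Reachable (some i) (some j) := by
  refine (reachable_blockRoot S P i).trans ?_
  convert (reachable_blockRoot S P j).symm using 4

lemma reachable_none_of_blockLabel_eq_none {i : Fin (m + 1)}
    (h : blockLabel (S.map Fin.valEmbedding) (P.map Fin.valEmbedding) (some i) = none) :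
    (fanSpanning S P).Reachable none (some i) := by
  have hspoked : blockRoot (P.map Fin.valEmbedding) i ∈
      spokedRoots (S.map Fin.valEmbedding) (P.map Fin.valEmbedding) := by
    by_contra hc
    simp [blockLabel, hc] at h
  obtain ⟨_, hk, hroot⟩ := mem_image.mp hspoked
  obtain ⟨k, hkS, rfl⟩ := mem_map.mp hk
  have hadj : (fanSpanning S P).Adj none (some k) :=
    (fanSpanning_adj S P).mpr ⟨by simp, .inl k, inl_mem_disjSum.mpr hkS, rfl⟩
  exact hadj.reachable.trans (reachable_of_blockRoot_eq S P hroot)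

lemma reachable_of_blockLabel_eq {a b : Option (Fin (m + 1))}
    (h : blockLabel (S.map Fin.valEmbedding) (P.map Fin.valEmbedding) a =
      blockLabel (S.map Fin.valEmbedding) (P.map Fin.valEmbedding) b) :
    (fanSpanning S P).Reachable a b := by
  obtain _ | i := a <;> obtain _ | j := b
  · rfl
  · exact reachable_none_of_blockLabel_eq_none S P h.symm
  · exact (reachable_none_of_blockLabel_eq_none S P h).symm
  cases hi : blockLabel (S.map Fin.valEmbedding) (P.map Fin.valEmbedding) (some i) with
  | none =>
    exact (reachable_none_of_blockLabel_eq_none S P hi).symm.trans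
      (reachable_none_of_blockLabel_eq_none S P (h ▸ hi))
  | some r =>
    exact reachable_of_blockRoot_eq S P
      ((blockRoot_of_blockLabel_eq_some hi).trans (blockRoot_of_blockLabel_eq_some (h ▸ hi)).symm)

lemma omega_fanEdgeSets :
    (fanGraph (m + 1)).toMultigraph.omega (fanEdgeSets (S, P)) =
      #(freeRoots (m + 1) (S.map Fin.valEmbedding) (P.map Fin.valEmbedding)) + 1 := by
  change Nat.card (fanSpanning S P).ConnectedComponent = _
  rw [SimpleGraph.card_connectedComponent_eq_card_image _ _ (fun _ _ => blockLabel_eq_of_adj S P)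
      (fun _ _ => reachable_of_blockLabel_eq S P),
    image_blockLabel, card_insert_of_notMem (by simp),
    card_image_of_injective _ (Option.some_injective ℕ)]

lemma rk_fanEdgeSets :
    (fanGraph (m + 1)).toMultigraph.rk (fanEdgeSets (S, P)) =
      m + 1 - #(freeRoots (m + 1) (S.map Fin.valEmbedding) (P.map Fin.valEmbedding)) := by
  rw [Multigraph.rk, omega_fanEdgeSets]
  change Fintype.card (Option (Fin (m + 1))) - _ = _
  rw [Fintype.card_option, Fintype.card_fin]
  omega

end Components

lemma fanEdgeSets_univ : fanEdgeSets (m := m) (univ, univ) = univ := by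
  change fanEdgeEquiv.finsetCongr (univ.disjSum univ) = univ
  rw [univ_disjSum_univ, Equiv.finsetCongr_apply, map_univ_equiv]

lemma rk_univ_fanGraph : (fanGraph (m + 1)).toMultigraph.rk univ = m + 1 := by
  rw [← fanEdgeSets_univ, rk_fanEdgeSets, Fin.map_valEmbedding_univ, Nat.Iio_eq_range,
    freeRoots_range, card_empty, Nat.sub_zero]

end Fan

namespace Fan

variable {R : Type*} [CommRing R] (x y : R)

lemma pow_mul_tutte_fanGraph (m : ℕ) :
    (y - 1) ^ (m + 1) * (fanGraph (m + 1)).toMultigraph.tutte x y = fanStateSum x y (m + 1) := by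
  rw [Multigraph.tutte, mul_sum, ← Equiv.sum_comp fanEdgeSets, Fintype.sum_prod_type, fanStateSum,
    Nat.add_sub_cancel, ← Fin.sum_finset_map_valEmbedding]
  refine sum_congr rfl fun S _ => ?_
  rw [← Fin.sum_finset_map_valEmbedding]
  refine sum_congr rfl fun P _ => ?_
  have hP : P.map Fin.valEmbedding ⊆ range m := fun r hr => by
    obtain ⟨i, -, rfl⟩ := mem_map.mp hr
    exact mem_range.mpr i.2
  have hle := le_card_add_card_add_card_freeRoots (n := m + 1) (S.map Fin.valEmbedding) hP
  have hfree := card_freeRoots_le (m + 1) (S.map Fin.valEmbedding) (P.map Fin.valEmbedding)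
  rw [rk_univ_fanGraph, rk_fanEdgeSets, card_fanEdgeSets]
  rw [card_map, card_map] at hle ⊢
  rw [Nat.sub_sub_self hfree, mul_left_comm, ← pow_add]
  congr 2
  omega

end Fan

/-- For every `n ≥ 1`, in `ℤ[x, y]`:
`T(F_n) = y(1−x) Σ_{j=0}^{⌊(n−2)/2⌋} C(n−j−2, j)(x+y+1)^(n−2j−2)(−xy)^j`
`+ x Σ_{j=0}^{⌊(n−1)/2⌋} C(n−j−1, j)(x+y+1)^(n−2j−1)(−xy)^j`
(the first sum being empty when `n = 1`; note `⌊(n−2)/2⌋ + 1 = ⌊n/2⌋` for `n ≥ 2` and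
`⌊(n−1)/2⌋ + 1 = ⌊(n+1)/2⌋` for `n ≥ 1`). -/
theorem fan_tutte_binomial_formula (n : ℕ) (hn : 1 ≤ n) :
    (fanGraph n).toMultigraph.tutte xZ yZ =
      yZ * (1 - xZ) *
        (∑ j ∈ Finset.range (n / 2),
          (Nat.choose (n - j - 2) j : Zxy) * (xZ + yZ + 1) ^ (n - 2 * j - 2) *
            (-(xZ * yZ)) ^ j)
      + xZ *
        (∑ j ∈ Finset.range ((n + 1) / 2),
          (Nat.choose (n - j - 1) j : Zxy) * (xZ + yZ + 1) ^ (n - 2 * j - 1) *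
            (-(xZ * yZ)) ^ j) := by
  obtain ⟨m, rfl⟩ : ∃ m, n = m + 1 := ⟨n - 1, by omega⟩
  have hy : yZ - 1 ≠ 0 := fun h => by
    simpa [yZ] using congrArg (MvPolynomial.eval fun _ => (0 : ℤ)) h
  have h := Fan.pow_mul_tutte_fanGraph xZ yZ m
  rw [Fan.fanStateSum_eq_lucasU] at h
  rw [mul_left_cancel₀ (pow_ne_zero _ hy) h, lucasU_eq_sum_choose, lucasU_eq_sum_choose, add_comm]
  refine congrArg (· + _) (congrArg _ (sum_congr rfl fun j _ => ?_))
  rw [show m + 1 - j - 2 = m - j - 1 by omega, show m + 1 - 2 * j - 2 = m - 2 * j - 1 by omega]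
end
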